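/- arXiv:2202.10752 — 3 statements merged into one kernel-verified Lean document; each statement's English description precedes it below -/
import Mathlib

section
/- Suppose U : ℝ≥0 → ℝ≥0 is piecewise absolutely continuous with jump times 0 < t₁ < t₂ < ... satisfying t_{j+1} − t_j ≥ ε > 0, U'(t) ≤ −ϖ·U(t) + c on each interval (t_j, t_{j+1}) for ϖ > 0, c ≥ 0, and U(t_j⁺) ≤ U(t_j⁻) + d at each jump with d ≥ 0. Then for all t ≥ 0, U(t) ≤ e^{−ϖ t}·U(0) + (c + ϖ·d)/(ϖ·(1 − e^{−ε·ϖ})). -/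
/-!
Between jumps, `exp (ϖ s) (U s - c / ϖ)` is nonincreasing, so over a flow interval of length `τ`
the excess `U - c / ϖ` is multiplied by `exp (-ϖ τ) ≤ exp (-ε ϖ)`, and at a jump `U` grows by at
most `d`. Hence at the jump times the excess of `U` over `exp (-ϖ s) U 0` stays below the fixed
point `B = (c + ϖ d) / (ϖ (1 - exp (-ε ϖ)))` of `B ↦ exp (-ε ϖ) B + c / ϖ + d`; inside a flow
interval the bound interpolates between `B` and `c / ϖ ≤ B`.
-/

open Set Filter Topology Real

section Flow

variable {U f : ℝ → ℝ} {ϖ c a b : ℝ}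

theorem sub_div_le_exp_mul_sub_div_of_hasDerivAt_le (hϖ : ϖ ≠ 0) (hab : a ≤ b)
    (hU : ContinuousOn U (Icc a b)) (hU' : ∀ s ∈ Ioo a b, HasDerivAt U (f s) s)
    (hf : ∀ s ∈ Ioo a b, f s ≤ -ϖ * U s + c) :
    U b - c / ϖ ≤ exp (-ϖ * (b - a)) * (U a - c / ϖ) := by
  set g : ℝ → ℝ := fun y => exp (ϖ * (y - a)) * (U y - c / ϖ)
  have hg' : ∀ s ∈ Ioo a b, HasDerivAt g (exp (ϖ * (s - a)) * (f s + ϖ * U s - c)) s := by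
    intro s hs
    have hexp : HasDerivAt (fun y => exp (ϖ * (y - a))) (exp (ϖ * (s - a)) * ϖ) s := by
      simpa using ((hasDerivAt_id s).sub_const a).const_mul ϖ |>.exp
    refine (hexp.mul ((hU' s hs).sub_const (c / ϖ))).congr_deriv ?_
    field_simp
    ring
  have hanti : AntitoneOn g (Icc a b) := by
    refine antitoneOn_of_hasDerivWithinAt_nonpos (convex_Icc a b)
      (f' := fun s => exp (ϖ * (s - a)) * (f s + ϖ * U s - c))
      ((continuous_exp.comp (by fun_prop)).continuousOn.mul (hU.sub continuousOn_const))
      (fun s hs => ?_) (fun s hs => ?_) <;> rw [interior_Icc] at hs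
    · exact (hg' s hs).hasDerivWithinAt
    · have := hf s hs
      exact mul_nonpos_of_nonneg_of_nonpos (exp_pos _).le (by linarith)
  have hgb : g b ≤ U a - c / ϖ := by
    simpa [g] using hanti (left_mem_Icc.2 hab) (right_mem_Icc.2 hab) hab
  calc U b - c / ϖ = exp (-ϖ * (b - a)) * g b := by
        rw [← mul_assoc, ← exp_add]; ring_nf; simp
    _ ≤ exp (-ϖ * (b - a)) * (U a - c / ϖ) := by gcongr

theorem sub_div_le_exp_mul_sub_div_of_mem_Ico (hϖ : ϖ ≠ 0)
    (hU : ContinuousOn U (Ico a b)) (hU' : ∀ s ∈ Ioo a b, HasDerivAt U (f s) s)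
    (hf : ∀ s ∈ Ioo a b, f s ≤ -ϖ * U s + c) {s : ℝ} (hs : s ∈ Ico a b) :
    U s - c / ϖ ≤ exp (-ϖ * (s - a)) * (U a - c / ϖ) :=
  have hsub : Ioo a s ⊆ Ioo a b := Ioo_subset_Ioo_right hs.2.le
  sub_div_le_exp_mul_sub_div_of_hasDerivAt_le hϖ hs.1
    (hU.mono (Icc_subset_Ico_right hs.2)) (fun x hx => hU' x (hsub hx))
    (fun x hx => hf x (hsub hx))

theorem sub_div_le_exp_mul_sub_div_of_tendsto_nhdsLT (hϖ : ϖ ≠ 0) (hab : a < b)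
    (hU : ContinuousOn U (Ico a b)) (hU' : ∀ s ∈ Ioo a b, HasDerivAt U (f s) s)
    (hf : ∀ s ∈ Ioo a b, f s ≤ -ϖ * U s + c) {L : ℝ} (hL : Tendsto U (𝓝[<] b) (𝓝 L)) :
    L - c / ϖ ≤ exp (-ϖ * (b - a)) * (U a - c / ϖ) := by
  have hbound : Continuous fun s => exp (-ϖ * (s - a)) * (U a - c / ϖ) := by fun_prop
  refine le_of_tendsto_of_tendsto (hL.sub_const _)
    (hbound.tendsto b |>.mono_left nhdsWithin_le_nhds) ?_
  filter_upwards [Ioo_mem_nhdsLT hab] with s hs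
  exact sub_div_le_exp_mul_sub_div_of_mem_Ico hϖ hU hU' hf (Ioo_subset_Ico_self hs)

end Flow

theorem le_exp_mul_add_of_sub_le_exp_mul_sub {ϖ r s x y m E B : ℝ}
    (hx : x - m ≤ exp (-ϖ * (s - r)) * (y - m)) (hy : y ≤ exp (-ϖ * r) * E + B) :
    x ≤ exp (-ϖ * s) * E + m + exp (-ϖ * (s - r)) * (B - m) := by
  have hexp : exp (-ϖ * (s - r)) * exp (-ϖ * r) = exp (-ϖ * s) := by
    rw [← exp_add]; ring_nf
  calc x ≤ m + exp (-ϖ * (s - r)) * (y - m) := by linarith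
    _ ≤ m + exp (-ϖ * (s - r)) * (exp (-ϖ * r) * E + B - m) := by gcongr
    _ = exp (-ϖ * s) * E + m + exp (-ϖ * (s - r)) * (B - m) := by rw [← hexp]; ring

theorem le_exp_mul_add_of_jump_le {t : ℕ → ℝ} {U : ℝ → ℝ} {ϖ q m d B : ℝ} (ht0 : t 0 = 0)
    (hB : 0 ≤ B) (hmB : m ≤ B) (hfix : q * (B - m) + m + d ≤ B)
    (hdecay : ∀ j, exp (-ϖ * (t (j + 1) - t j)) ≤ q)
    (hjump : ∀ j, U (t (j + 1)) - d - m ≤ exp (-ϖ * (t (j + 1) - t j)) * (U (t j) - m)) :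
    ∀ j, U (t j) ≤ exp (-ϖ * t j) * U 0 + B
  | 0 => by simp [ht0, hB]
  | j + 1 => by
    have := le_exp_mul_add_of_sub_le_exp_mul_sub (hjump j)
      (le_exp_mul_add_of_jump_le ht0 hB hmB hfix hdecay hjump j)
    nlinarith [hdecay j]

theorem exists_mem_Ico_of_le_of_lt {α : Type*} [LinearOrder α] {t : ℕ → α} {s : α}
    (h0 : t 0 ≤ s) : ∀ {n}, s < t n → ∃ j, s ∈ Ico (t j) (t (j + 1))
  | 0, hn => absurd h0 (not_le.2 hn)
  | n + 1, hn => (lt_or_ge s (t n)).elim (exists_mem_Ico_of_le_of_lt h0) fun h => ⟨n, h, hn⟩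

theorem add_nat_mul_le_of_le_sub {t : ℕ → ℝ} {ε : ℝ} (hgap : ∀ j, ε ≤ t (j + 1) - t j) :
    ∀ n : ℕ, t 0 + n * ε ≤ t n
  | 0 => by simp
  | n + 1 => by push_cast; linarith [add_nat_mul_le_of_le_sub hgap n, hgap n]

theorem div_le_bound_and_step_le_bound {ε ϖ c d : ℝ} (hε : 0 < ε) (hϖ : 0 < ϖ) (hc : 0 ≤ c)
    (hd : 0 ≤ d) :
    let B := (c + ϖ * d) / (ϖ * (1 - exp (-ε * ϖ)))
    c / ϖ ≤ B ∧ exp (-ε * ϖ) * (B - c / ϖ) + c / ϖ + d ≤ B := by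
  intro B
  have hq : exp (-ε * ϖ) < 1 := exp_lt_one_iff.2 (by nlinarith)
  have hB : B * (1 - exp (-ε * ϖ)) = c / ϖ + d := by
    rw [div_mul_eq_mul_div, mul_div_mul_right _ _ (sub_pos.2 hq).ne', add_div,
      mul_div_cancel_left₀ _ hϖ.ne']
  have hm : 0 ≤ c / ϖ := div_nonneg hc hϖ.le
  constructor <;> nlinarith [exp_pos (-ε * ϖ)]

theorem hybrid_flow_jump_estimate_general (ε ϖ c d : ℝ) (hε : 0 < ε) (hϖ : 0 < ϖ)
    (hc : 0 ≤ c) (hd : 0 ≤ d)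
    (t : ℕ → ℝ) (ht0 : t 0 = 0) (hgap : ∀ j, ε ≤ t (j + 1) - t j)
    (U f : ℝ → ℝ)
    (hflowc : ∀ j, ContinuousOn U (Set.Ico (t j) (t (j + 1))))
    (hderiv : ∀ j, ∀ s ∈ Set.Ioo (t j) (t (j + 1)), HasDerivAt U (f s) s)
    (hfineq : ∀ j, ∀ s ∈ Set.Ioo (t j) (t (j + 1)), f s ≤ -ϖ * U s + c)
    (hjump : ∀ j, ∃ Lm : ℝ,
      Filter.Tendsto U (nhdsWithin (t (j + 1)) (Set.Iio (t (j + 1)))) (nhds Lm) ∧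
        U (t (j + 1)) ≤ Lm + d) :
    ∀ s, 0 ≤ s →
      U s ≤ Real.exp (-ϖ * s) * U 0 +
        (c + ϖ * d) / (ϖ * (1 - Real.exp (-ε * ϖ))) := by
  obtain ⟨hmB, hfix⟩ := div_le_bound_and_step_le_bound hε hϖ hc hd
  have hdecay : ∀ j, exp (-ϖ * (t (j + 1) - t j)) ≤ exp (-ε * ϖ) := fun j =>
    exp_le_exp.2 (by linarith [mul_le_mul_of_nonneg_left (hgap j) hϖ.le])
  have hstep : ∀ j,
      U (t (j + 1)) - d - c / ϖ ≤ exp (-ϖ * (t (j + 1) - t j)) * (U (t j) - c / ϖ) := by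
    intro j
    obtain ⟨L, hL, hUL⟩ := hjump j
    have := sub_div_le_exp_mul_sub_div_of_tendsto_nhdsLT hϖ.ne'
      (by linarith [hgap j]) (hflowc j) (hderiv j) (hfineq j) hL
    linarith
  have hnodes := le_exp_mul_add_of_jump_le ht0 ((div_nonneg hc hϖ.le).trans hmB) hmB hfix
    hdecay hstep
  intro s hs
  obtain ⟨n, hn⟩ := exists_nat_gt (s / ε)
  obtain ⟨j, hj⟩ := exists_mem_Ico_of_le_of_lt (ht0 ▸ hs : t 0 ≤ s) (n := n) <| by
    have := add_nat_mul_le_of_le_sub hgap n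
    rw [div_lt_iff₀ hε] at hn
    linarith
  have hU := le_exp_mul_add_of_sub_le_exp_mul_sub
    (sub_div_le_exp_mul_sub_div_of_mem_Ico hϖ.ne' (hflowc j) (hderiv j) (hfineq j) hj)
    (hnodes j)
  have he : exp (-ϖ * (s - t j)) ≤ 1 := exp_le_one_iff.2 (by nlinarith [hj.1])
  linarith [mul_le_mul_of_nonneg_right he (sub_nonneg.2 hmB)]

/-- Combined flow/jump estimate (B17): if the nonnegative function `U` satisfies
`U' ≤ −ϖU + c` between the jump times `t j` (with dwell time `≥ ε`), and jumps
at most by `d` (relative to its left limit) at each jump time, then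
`U(s) ≤ e^{−ϖ s} U(0) + (c + ϖd)/(ϖ(1 − e^{−εϖ}))` for all `s ≥ 0`. -/
theorem hybrid_flow_jump_estimate (ε ϖ c d : ℝ) (hε : 0 < ε) (hϖ : 0 < ϖ)
    (hc : 0 ≤ c) (hd : 0 ≤ d)
    (t : ℕ → ℝ) (ht0 : t 0 = 0) (hgap : ∀ j, ε ≤ t (j + 1) - t j)
    (U f : ℝ → ℝ) (hUnn : ∀ s, 0 ≤ s → 0 ≤ U s)
    (hflowc : ∀ j, ContinuousOn U (Set.Ico (t j) (t (j + 1))))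
    (hderiv : ∀ j, ∀ s ∈ Set.Ioo (t j) (t (j + 1)), HasDerivAt U (f s) s)
    (hfineq : ∀ j, ∀ s ∈ Set.Ioo (t j) (t (j + 1)), f s ≤ -ϖ * U s + c)
    (hjump : ∀ j, ∃ Lm : ℝ,
      Filter.Tendsto U (nhdsWithin (t (j + 1)) (Set.Iio (t (j + 1)))) (nhds Lm) ∧
        U (t (j + 1)) ≤ Lm + d) :
    ∀ s, 0 ≤ s →
      U s ≤ Real.exp (-ϖ * s) * U 0 +
        (c + ϖ * d) / (ϖ * (1 - Real.exp (-ε * ϖ))) :=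
  hybrid_flow_jump_estimate_general ε ϖ c d hε hϖ hc hd t ht0 hgap U f hflowc hderiv hfineq hjump
end

section
/- Let W : ℝ≥0 → ℝ≥0 and suppose there exist λ ∈ [0,1) and a ≥ 0 such that at each jump W⁺ ≤ λ·W + a, and between jumps W grows at most exponentially: W(t) ≤ e^{L(t−t_j)}·W(t_j⁺) + b·(e^{L(t−t_j)} − 1)/L for L > 0, b ≥ 0, with inter-jump times at most T. If λ·e^{LT} < 1, then W is uniformly ultimately bounded: lim sup over jump indices j of W(t_j) ≤ (a·e^{LT} + b·(e^{LT} − 1)/L)/(1 − λ·e^{LT}). -/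
/-- Small-gain/MASP condition: if at each jump `W(t_j⁺) ≤ λ W(t_j) + a` with
`λ ∈ [0,1)`, between jumps `W` grows at most exponentially with rate `L > 0` and
offset `b`, inter-jump times are at most `T`, and `λ e^{LT} < 1`, then `W` is
uniformly ultimately bounded at the jump times. -/
theorem small_gain_ultimate_bound (lam L a b T : ℝ) (hlam0 : 0 ≤ lam)
    (hlam1 : lam < 1) (hL : 0 < L) (ha : 0 ≤ a) (hb : 0 ≤ b) (hT : 0 < T)
    (hsg : lam * Real.exp (L * T) < 1)
    (t : ℕ → ℝ) (hmono : StrictMono t) (hgap : ∀ j, t (j + 1) - t j ≤ T)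
    (W : ℝ → ℝ) (hW : ∀ s, 0 ≤ W s) (Wp : ℕ → ℝ)
    (hjump : ∀ j, Wp j ≤ lam * W (t j) + a)
    (hflow : ∀ j, ∀ s ∈ Set.Ioc (t j) (t (j + 1)),
      W s ≤ Real.exp (L * (s - t j)) * Wp j +
        b * (Real.exp (L * (s - t j)) - 1) / L) :
    Filter.limsup (fun j => W (t j)) Filter.atTop ≤
      (a * Real.exp (L * T) + b * (Real.exp (L * T) - 1) / L) /
        (1 - lam * Real.exp (L * T)) := by
  obtain ⟨E, hE⟩ : ∃ E, E = Real.exp (L * T) := ⟨_, rfl⟩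
  obtain ⟨μ, hμ⟩ : ∃ μ, μ = lam * E := ⟨_, rfl⟩
  obtain ⟨c, hc⟩ : ∃ c, c = a * E + b * (E - 1) / L := ⟨_, rfl⟩
  have hE1 : 1 ≤ E := hE ▸ Real.one_le_exp (by positivity)
  have hμ0 : 0 ≤ μ := by rw [hμ]; exact mul_nonneg hlam0 (by linarith)
  have hμ1 : μ < 1 := by rw [hμ, hE]; exact hsg
  have h1μ : (0:ℝ) < 1 - μ := by linarith
  have hc0 : 0 ≤ c := by
    rw [hc]
    exact add_nonneg (mul_nonneg ha (by linarith))
      (div_nonneg (mul_nonneg hb (by linarith)) hL.le)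
  have key : ∀ j, W (t (j + 1)) ≤ μ * W (t j) + c := by
    intro j
    have hlt : t j < t (j + 1) := hmono (Nat.lt_succ_self j)
    have hdT : t (j + 1) - t j ≤ T := hgap j
    have hexp : Real.exp (L * (t (j + 1) - t j)) ≤ E := by
      rw [hE]; exact Real.exp_le_exp.2 (by nlinarith)
    have h1 := hflow j (t (j + 1)) ⟨hlt, le_refl _⟩
    have h2 := hjump j
    have hWa : 0 ≤ lam * W (t j) + a := add_nonneg (mul_nonneg hlam0 (hW _)) ha
    have hWp : Real.exp (L * (t (j + 1) - t j)) * Wp j ≤ E * (lam * W (t j) + a) :=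
      calc Real.exp (L * (t (j + 1) - t j)) * Wp j
          ≤ Real.exp (L * (t (j + 1) - t j)) * (lam * W (t j) + a) :=
            mul_le_mul_of_nonneg_left h2 (Real.exp_nonneg _)
        _ ≤ E * (lam * W (t j) + a) := mul_le_mul_of_nonneg_right hexp hWa
    have hbpart : b * (Real.exp (L * (t (j + 1) - t j)) - 1) / L ≤ b * (E - 1) / L := by
      gcongr
    have heq : E * (lam * W (t j) + a) + b * (E - 1) / L = μ * W (t j) + c := by
      rw [hμ, hc]; ring
    linarith
  have ind : ∀ j, W (t j) ≤ μ ^ j * W (t 0) + c / (1 - μ) := by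
    intro j
    induction j with
    | zero =>
      simp only [pow_zero, one_mul]
      have := div_nonneg hc0 h1μ.le
      linarith
    | succ j ih =>
      have hk := key j
      have h3 : μ * W (t j) ≤ μ * (μ ^ j * W (t 0) + c / (1 - μ)) :=
        mul_le_mul_of_nonneg_left ih hμ0
      have h4 : μ * (μ ^ j * W (t 0) + c / (1 - μ)) + c
          = μ ^ (j + 1) * W (t 0) + c / (1 - μ) := by
        field_simp
        ring
      linarith
  have hlim : Filter.Tendsto (fun j => μ ^ j * W (t 0) + c / (1 - μ)) Filter.atTop
      (nhds (c / (1 - μ))) := by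
    have h0 : Filter.Tendsto (fun j : ℕ => μ ^ j) Filter.atTop (nhds 0) :=
      tendsto_pow_atTop_nhds_zero_of_lt_one hμ0 hμ1
    have := (h0.mul_const (W (t 0))).add_const (c / (1 - μ))
    simpa using this
  have hle : Filter.limsup (fun j => W (t j)) Filter.atTop ≤ c / (1 - μ) :=
    calc Filter.limsup (fun j => W (t j)) Filter.atTop
        ≤ Filter.limsup (fun j => μ ^ j * W (t 0) + c / (1 - μ)) Filter.atTop :=
          Filter.limsup_le_limsup (Filter.Eventually.of_forall ind)
            (Filter.isCoboundedUnder_le_of_le _ (fun j => hW (t j)))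
            hlim.isBoundedUnder_le
      _ = c / (1 - μ) := hlim.limsup_eq
  rw [hc, hμ, hE] at hle
  exact hle
end

section
/- For the scalar Riccati equation φ' = −2Lφ − γ((1+ϱ)φ² + 1) with L ≥ 0, γ > 0, ϱ > 0, and initial value φ(0) = φ₀ > 0, the maximal time T* for which the solution satisfies φ(T*) = 0 is finite and given explicitly by: T* = (1/(γ·r))·(arctan(( (1+ϱ)φ₀ + L/γ )/r) − arctan((L/γ)/r)) when r² := (1+ϱ) − (L/γ)² > 0, where r = √((1+ϱ) − (L/γ)²). -/
/-!
With `a = L/γ` and `r² = (1+ϱ) − a²`, the substitution `u = (1+ϱ)φ + a` turns the Riccati equation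
into `u' = −γ(u² + r²)`, so `arctan(u/r)` decreases at the constant rate `γr`. Since
`x ↦ arctan(((1+ϱ)x + a)/r)` is strictly increasing, `φ` is positive exactly as long as this
angle stays above its value at `x = 0`, which it reaches at time `T*`.
-/

open Real Set

lemma hasDerivAt_arctan_div_of_hasDerivAt {u : ℝ → ℝ} {k r τ : ℝ} (hr : r ≠ 0)
    (hu : HasDerivAt u (-k * (u τ ^ 2 + r ^ 2)) τ) :
    HasDerivAt (fun t => arctan (u t / r)) (-k * r) τ := by
  refine (hu.div_const r).arctan.congr_deriv ?_
  have : 0 < r ^ 2 + u τ ^ 2 := by positivity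
  field_simp
  ring

lemma hasDerivAt_riccati_shift {φ : ℝ → ℝ} {L γ p τ : ℝ} (hγ : γ ≠ 0)
    (hφ : HasDerivAt φ (-2 * L * φ τ - γ * (p * φ τ ^ 2 + 1)) τ) :
    HasDerivAt (fun t => p * φ t + L / γ)
      (-γ * ((p * φ τ + L / γ) ^ 2 + (p - (L / γ) ^ 2))) τ := by
  refine ((hφ.const_mul p).add_const (L / γ)).congr_deriv ?_
  field_simp
  ring

theorem riccati_arctan_eq {φ : ℝ → ℝ} {L γ p r T : ℝ} (hγ : γ ≠ 0) (hr : r ≠ 0)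
    (hr2 : r ^ 2 = p - (L / γ) ^ 2)
    (hode : ∀ τ ∈ Icc 0 T, HasDerivAt φ (-2 * L * φ τ - γ * (p * φ τ ^ 2 + 1)) τ) :
    ∀ τ ∈ Icc 0 T, arctan ((p * φ τ + L / γ) / r)
      = arctan ((p * φ 0 + L / γ) / r) - γ * r * τ := by
  have hderiv : ∀ τ ∈ Icc 0 T,
      HasDerivAt (fun t => arctan ((p * φ t + L / γ) / r)) (-γ * r) τ := fun τ hτ =>
    hasDerivAt_arctan_div_of_hasDerivAt hr (hr2 ▸ hasDerivAt_riccati_shift hγ (hode τ hτ))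
  have hline : ∀ τ, HasDerivAt (fun t => arctan ((p * φ 0 + L / γ) / r) - γ * r * t) (-γ * r) τ :=
    fun τ => by simpa using ((hasDerivAt_id τ).const_mul (γ * r)).const_sub _
  refine eq_of_has_deriv_right_eq
    (fun τ hτ => (hderiv τ (Ico_subset_Icc_self hτ)).hasDerivWithinAt)
    (fun τ _ => (hline τ).hasDerivWithinAt)
    (fun τ hτ => (hderiv τ hτ).continuousAt.continuousWithinAt)
    (fun τ _ => (hline τ).continuousAt.continuousWithinAt) (by simp)

theorem riccati_explicit_zero_time_general (L γ ϱ φ₀ r Tstar : ℝ)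
    (hγ : 0 < γ) (hφ₀ : 0 < φ₀)
    (hdisc : L ^ 2 < (1 + ϱ) * γ ^ 2)
    (hr : r = Real.sqrt ((1 + ϱ) - (L / γ) ^ 2))
    (hTstar : Tstar = (1 / (γ * r)) *
      (Real.arctan (((1 + ϱ) * φ₀ + L / γ) / r) - Real.arctan ((L / γ) / r)))
    (φ : ℝ → ℝ) (h0 : φ 0 = φ₀)
    (hode : ∀ τ ∈ Set.Icc 0 Tstar,
      HasDerivAt φ (-2 * L * φ τ - γ * ((1 + ϱ) * (φ τ) ^ 2 + 1)) τ) :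
    φ Tstar = 0 ∧ ∀ τ ∈ Set.Ico 0 Tstar, 0 < φ τ := by
  have hp : 0 < 1 + ϱ := pos_of_mul_pos_left ((sq_nonneg L).trans_lt hdisc) (sq_nonneg γ)
  have hrad : 0 < (1 + ϱ) - (L / γ) ^ 2 := by
    rw [div_pow, sub_pos, div_lt_iff₀ (by positivity)]
    linarith
  have hr0 : 0 < r := hr ▸ sqrt_pos.2 hrad
  have hr2 : r ^ 2 = (1 + ϱ) - (L / γ) ^ 2 := hr ▸ sq_sqrt hrad.le
  set θ : ℝ → ℝ := fun x => arctan (((1 + ϱ) * x + L / γ) / r)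
  have hθ : StrictMono θ :=
    arctan_strictMono.comp (((strictMono_mul_left_of_pos hp).add_const _).div_const hr0)
  have hθT : θ φ₀ - γ * r * Tstar = θ 0 := by
    rw [hTstar, ← mul_assoc, mul_one_div_cancel (mul_pos hγ hr0).ne', one_mul]
    simp [θ]
  have hT0 : 0 ≤ Tstar := by
    rw [hTstar]
    exact mul_nonneg (by positivity) (sub_nonneg.2 (by simpa [θ] using (hθ hφ₀).le))
  have hsol : ∀ τ ∈ Icc 0 Tstar, θ (φ τ) = θ φ₀ - γ * r * τ := by
    simpa [θ, h0] using riccati_arctan_eq hγ.ne' hr0.ne' hr2 hode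
  refine ⟨hθ.injective ((hsol Tstar ⟨hT0, le_rfl⟩).trans hθT), fun τ hτ => hθ.lt_iff_lt.1 ?_⟩
  rw [hsol τ (Ico_subset_Icc_self hτ), ← hθT]
  have := mul_lt_mul_of_pos_left hτ.2 (mul_pos hγ hr0)
  linarith

/-- Explicit formula for the maximal sampling period: the solution of the Riccati
equation `φ' = −2Lφ − γ((1+ϱ)φ² + 1)` with `φ(0) = φ₀ > 0` and
`(1+ϱ)γ² > L²` first reaches zero exactly at
`T* = (1/(γr))(arctan(((1+ϱ)φ₀ + L/γ)/r) − arctan((L/γ)/r))`, where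
`r = √((1+ϱ) − (L/γ)²)`; in particular `φ(T*) = 0` and `φ > 0` on `[0, T*)`. -/
theorem riccati_explicit_zero_time (L γ ϱ φ₀ r Tstar : ℝ)
    (hL : 0 ≤ L) (hγ : 0 < γ) (hϱ : 0 < ϱ) (hφ₀ : 0 < φ₀)
    (hdisc : L ^ 2 < (1 + ϱ) * γ ^ 2)
    (hr : r = Real.sqrt ((1 + ϱ) - (L / γ) ^ 2))
    (hTstar : Tstar = (1 / (γ * r)) *
      (Real.arctan (((1 + ϱ) * φ₀ + L / γ) / r) - Real.arctan ((L / γ) / r)))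
    (φ : ℝ → ℝ) (h0 : φ 0 = φ₀)
    (hode : ∀ τ ∈ Set.Icc 0 Tstar,
      HasDerivAt φ (-2 * L * φ τ - γ * ((1 + ϱ) * (φ τ) ^ 2 + 1)) τ) :
    φ Tstar = 0 ∧ ∀ τ ∈ Set.Ico 0 Tstar, 0 < φ τ :=
  riccati_explicit_zero_time_general L γ ϱ φ₀ r Tstar hγ hφ₀ hdisc hr hTstar φ h0 hode
end
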